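/- arXiv:2503.11250 — 2 statements merged into one kernel-verified Lean document; each statement's English description precedes it below -/
import Mathlib

section
/- Let μ ∈ ℝ, σ > 0, t ∈ ℝ and y ∈ ℝ. Set t̃ = (t − μ)/σ and ỹ = (max(y, t) − μ)/σ. Then the threshold-weighted CRPS of the Gaussian predictive distribution Φ_{μ,σ²} at observation y, with weighting measure γ₁ having Lebesgue density u ↦ 1{u ≥ t}, satisfies CRPS_{γ₁}(Φ_{μ,σ²}, y) = σ·[ −t̃·Φ(t̃)² + ỹ·(2Φ(ỹ) − 1) + 2φ(ỹ) − 2φ(t̃)Φ(t̃) − (1/√π)·(1 − Φ(t̃·√2)) ]. -/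
open MeasureTheory ProbabilityTheory Set

noncomputable section

/-- The standard normal distribution `N(0,1)` on `ℝ`. -/
def stdNormal : Measure ℝ := gaussianReal 0 1

/-- The standard normal CDF `Φ`. -/
def Phi (x : ℝ) : ℝ := (stdNormal (Iic x)).toReal

/-- The standard normal PDF `φ`. -/
def stdPDF (x : ℝ) : ℝ := (Real.sqrt (2 * Real.pi))⁻¹ * Real.exp (-(x ^ 2) / 2)

/-- The CDF of the normal distribution `N(μ, σ²)`: `Φ_{μ,σ²}(u) = Φ((u - μ)/σ)`. -/
def normCDF (μ σ : ℝ) (u : ℝ) : ℝ := Phi ((u - μ) / σ)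

/-- The normal distribution `N(μ, σ²)` as a measure on `ℝ`. -/
def gaussMeasure (μ σ : ℝ) : Measure ℝ := gaussianReal μ ⟨σ ^ 2, sq_nonneg σ⟩

/-- Threshold-weighted CRPS of a predictive CDF `F` at observation `y`, with weighting
measure `γ`: `∫ (F u - 1{y ≤ u})² dγ(u)`. -/
def twCRPS (γ : Measure ℝ) (F : ℝ → ℝ) (y : ℝ) : ℝ :=
  ∫ u, (F u - (Ici y).indicator (fun _ => (1 : ℝ)) u) ^ 2 ∂γ

/-- Expected threshold-weighted CRPS of the Gaussian `N(μ, σ²)` with weighting measure `γ`: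
the expectation of `y ↦ CRPS_γ(Φ_{μ,σ²}, y)` for `y ∼ N(μ, σ²)`. -/
def etwCRPS (γ : Measure ℝ) (μ σ : ℝ) : ℝ :=
  ∫ y, twCRPS γ (normCDF μ σ) y ∂(gaussMeasure μ σ)

/-- `γ₁`: the Borel measure on `ℝ` with Lebesgue density `u ↦ 1{u ≥ t}`. -/
def gamma1 (t : ℝ) : Measure ℝ :=
  volume.withDensity ((Ici t).indicator fun _ => (1 : ENNReal))

/-- `γ₂`: the Borel measure on `ℝ` with Lebesgue density `u ↦ (1/σγ) φ((u - t)/σγ)`. -/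
def gamma2 (t σγ : ℝ) : Measure ℝ :=
  volume.withDensity fun u => ENNReal.ofReal (1 / σγ * stdPDF ((u - t) / σγ))

end

open Filter Topology

section AuxLemmas

lemma stdPDF_eq_gauss : stdPDF = gaussianPDFReal 0 1 := by
  ext x
  simp [stdPDF, gaussianPDFReal]

lemma continuous_stdPDF : Continuous stdPDF := by
  unfold stdPDF
  fun_prop

lemma stdPDF_nonneg (x : ℝ) : 0 ≤ stdPDF x := by
  unfold stdPDF
  positivity

lemma integrable_stdPDF : Integrable stdPDF := by
  rw [stdPDF_eq_gauss]; exact ProbabilityTheory.integrable_gaussianPDFReal 0 1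

lemma integral_stdPDF : ∫ x, stdPDF x = 1 := by
  rw [stdPDF_eq_gauss]; exact ProbabilityTheory.integral_gaussianPDFReal_eq_one 0 one_ne_zero

lemma Phi_eq (x : ℝ) : Phi x = ∫ u in Iic x, stdPDF u := by
  rw [Phi, stdNormal, ProbabilityTheory.gaussianReal_apply_eq_integral 0 one_ne_zero,
    stdPDF_eq_gauss, ENNReal.toReal_ofReal]
  exact setIntegral_nonneg measurableSet_Iic fun u _ =>
    ProbabilityTheory.gaussianPDFReal_nonneg _ _ _

lemma oneSub_Phi (x : ℝ) : 1 - Phi x = ∫ u in Ioi x, stdPDF u := by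
  have h := intervalIntegral.integral_Iic_add_Ioi (b := x) (f := stdPDF) (μ := volume)
    integrable_stdPDF.integrableOn integrable_stdPDF.integrableOn
  rw [integral_stdPDF] at h
  rw [Phi_eq]
  linarith

lemma Phi_le_one (x : ℝ) : Phi x ≤ 1 := by
  have h := oneSub_Phi x
  have h2 : 0 ≤ ∫ u in Ioi x, stdPDF u :=
    setIntegral_nonneg measurableSet_Ioi fun u _ => stdPDF_nonneg u
  linarith

lemma hasDerivAt_Phi (x : ℝ) : HasDerivAt Phi (stdPDF x) x := by
  have hfun : Phi = fun x => Phi 0 + ∫ u in (0:ℝ)..x, stdPDF u := by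
    funext x
    rw [Phi_eq, Phi_eq, ← intervalIntegral.integral_Iic_sub_Iic
      integrable_stdPDF.integrableOn integrable_stdPDF.integrableOn]
    ring
  rw [hfun]
  refine HasDerivAt.const_add _ ?_
  exact intervalIntegral.integral_hasDerivAt_right
    integrable_stdPDF.intervalIntegrable
    continuous_stdPDF.stronglyMeasurable.stronglyMeasurableAtFilter
    continuous_stdPDF.continuousAt

lemma continuous_Phi : Continuous Phi := by
  rw [continuous_iff_continuousAt]
  exact fun x => (hasDerivAt_Phi x).continuousAt

lemma hasDerivAt_stdPDF (x : ℝ) : HasDerivAt stdPDF (-x * stdPDF x) x := by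
  have h1 : HasDerivAt (fun x : ℝ => -(x ^ 2) / 2) (-x) x := by
    have := ((hasDerivAt_pow 2 x).neg).div_const 2
    exact this.congr_deriv (by ring)
  have h2 := (h1.exp).const_mul (Real.sqrt (2 * Real.pi))⁻¹
  exact h2.congr_deriv (by unfold stdPDF; ring)

lemma tendsto_stdPDF_atTop : Tendsto stdPDF atTop (𝓝 0) := by
  have h : Tendsto (fun x : ℝ => -(x ^ 2) / 2) atTop atBot := by
    apply Tendsto.atBot_div_const (by norm_num : (0:ℝ) < 2)
    exact tendsto_neg_atTop_atBot.comp (tendsto_pow_atTop two_ne_zero)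
  have h2 := Real.tendsto_exp_atBot.comp h
  have h3 := h2.const_mul (Real.sqrt (2 * Real.pi))⁻¹
  rw [mul_zero] at h3
  exact h3

lemma tendsto_Phi_atTop : Tendsto Phi atTop (𝓝 1) := by
  have h := tendsto_measure_Iic_atTop (μ := stdNormal)
  have huniv : stdNormal univ = 1 := by
    rw [stdNormal]; exact measure_univ
  rw [huniv] at h
  have := (ENNReal.tendsto_toReal (by norm_num : (1:ENNReal) ≠ ⊤)).comp h
  exact this

lemma integrableOn_mul_stdPDF {x : ℝ} (hx : 0 < x) :
    IntegrableOn (fun u => u * stdPDF u) (Ioi x) := by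
  refine integrableOn_Ioi_deriv_of_nonneg' (g := fun u => -stdPDF u) (l := 0)
    (fun u _ => (hasDerivAt_stdPDF u).neg.congr_deriv (by ring))
    (fun u hu => mul_nonneg (le_trans hx.le (le_of_lt hu)) (stdPDF_nonneg u)) ?_
  have := tendsto_stdPDF_atTop.neg
  simpa using this

lemma integral_mul_stdPDF {x : ℝ} (hx : 0 < x) :
    ∫ u in Ioi x, u * stdPDF u = stdPDF x := by
  have h := integral_Ioi_of_hasDerivAt_of_nonneg' (g := fun u => -stdPDF u)
    (g' := fun u => u * stdPDF u)
    (fun u _ => (hasDerivAt_stdPDF u).neg.congr_deriv (by ring))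
    (fun u hu => mul_nonneg (le_trans hx.le (le_of_lt hu)) (stdPDF_nonneg u))
    (by simpa using tendsto_stdPDF_atTop.neg)
  simpa using h

lemma mills {x : ℝ} (hx : 0 < x) : 1 - Phi x ≤ stdPDF x / x := by
  rw [oneSub_Phi]
  have hmono : ∫ u in Ioi x, stdPDF u ≤ ∫ u in Ioi x, u * stdPDF u / x := by
    refine setIntegral_mono_on integrable_stdPDF.integrableOn
      ((integrableOn_mul_stdPDF hx).div_const x) measurableSet_Ioi ?_
    intro u hu
    rw [le_div_iff₀ hx]
    have hu' : x < u := hu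
    nlinarith [stdPDF_nonneg u]
  calc ∫ u in Ioi x, stdPDF u ≤ ∫ u in Ioi x, u * stdPDF u / x := hmono
    _ = (∫ u in Ioi x, u * stdPDF u) / x := by rw [integral_div]
    _ = stdPDF x / x := by rw [integral_mul_stdPDF hx]

lemma Phi_nonneg (x : ℝ) : 0 ≤ Phi x := ENNReal.toReal_nonneg

lemma tendsto_mul_sq_atTop : Tendsto (fun x => x * (1 - Phi x) ^ 2) atTop (𝓝 0) := by
  have hsq : Tendsto (fun x => stdPDF x ^ 2) atTop (𝓝 0) := by
    have := tendsto_stdPDF_atTop.pow 2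
    simpa using this
  refine tendsto_of_tendsto_of_tendsto_of_le_of_le' tendsto_const_nhds hsq ?_ ?_
  · filter_upwards [eventually_ge_atTop (0:ℝ)] with x hx
    exact mul_nonneg hx (sq_nonneg _)
  · filter_upwards [eventually_ge_atTop (1:ℝ)] with x hx
    have hx0 : (0:ℝ) < x := lt_of_lt_of_le one_pos hx
    have h1 := mills hx0
    have h2 : 0 ≤ 1 - Phi x := by have := Phi_le_one x; linarith
    calc x * (1 - Phi x) ^ 2 ≤ x * (stdPDF x / x) ^ 2 := by
          exact mul_le_mul_of_nonneg_left (pow_le_pow_left₀ h2 h1 2) hx0.le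
      _ = stdPDF x ^ 2 / x := by
          field_simp
      _ ≤ stdPDF x ^ 2 := div_le_self (sq_nonneg _) hx

lemma hasDerivAt_Phi_sqrt2 (x : ℝ) :
    HasDerivAt (fun x => Phi (x * Real.sqrt 2)) (Real.sqrt 2 * stdPDF (x * Real.sqrt 2)) x := by
  have := (hasDerivAt_Phi (x * Real.sqrt 2)).comp x (hasDerivAt_mul_const (Real.sqrt 2))
  exact this.congr_deriv (mul_comm _ _)

lemma pdf_sq (x : ℝ) : 2 * (stdPDF x * stdPDF x) =
    1 / Real.sqrt Real.pi * (Real.sqrt 2 * stdPDF (x * Real.sqrt 2)) := by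
  have hE : Real.exp (-((x * Real.sqrt 2) ^ 2) / 2)
      = Real.exp (-(x ^ 2) / 2) * Real.exp (-(x ^ 2) / 2) := by
    rw [← Real.exp_add]
    congr 1
    rw [mul_pow, Real.sq_sqrt (by norm_num : (0:ℝ) ≤ 2)]
    ring
  have hs : Real.sqrt (2 * Real.pi) = Real.sqrt 2 * Real.sqrt Real.pi :=
    Real.sqrt_mul (by norm_num) _
  have h22 : Real.sqrt 2 * Real.sqrt 2 = 2 := Real.mul_self_sqrt (by norm_num)
  have hπ : (0:ℝ) < Real.sqrt Real.pi := Real.sqrt_pos.mpr Real.pi_pos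
  have h2 : (0:ℝ) < Real.sqrt 2 := Real.sqrt_pos.mpr (by norm_num)
  unfold stdPDF
  rw [hE, hs]
  have hEpos : (0:ℝ) < Real.exp (-(x ^ 2) / 2) := Real.exp_pos _
  field_simp
  linear_combination -h22

lemma hasDerivAt_G (x : ℝ) :
    HasDerivAt (fun x => x * Phi x ^ 2 + 2 * stdPDF x * Phi x
      - 1 / Real.sqrt Real.pi * Phi (x * Real.sqrt 2)) (Phi x ^ 2) x := by
  have hP := hasDerivAt_Phi x
  have hD := hasDerivAt_stdPDF x
  have h1 : HasDerivAt (fun x => x * Phi x ^ 2)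
      (1 * Phi x ^ 2 + x * (2 * Phi x ^ 1 * stdPDF x)) x :=
    (hasDerivAt_id x).mul (hP.pow 2)
  have h2 : HasDerivAt (fun x => 2 * stdPDF x * Phi x)
      (2 * (-x * stdPDF x) * Phi x + 2 * stdPDF x * stdPDF x) x :=
    (hD.const_mul 2).mul hP
  have h3 : HasDerivAt (fun x => 1 / Real.sqrt Real.pi * Phi (x * Real.sqrt 2))
      (1 / Real.sqrt Real.pi * (Real.sqrt 2 * stdPDF (x * Real.sqrt 2))) x :=
    (hasDerivAt_Phi_sqrt2 x).const_mul _
  have h := (h1.add h2).sub h3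
  exact h.congr_deriv (by linear_combination pdf_sq x)

lemma hasDerivAt_H (x : ℝ) :
    HasDerivAt (fun x => x * (1 - Phi x) ^ 2 - 2 * stdPDF x * (1 - Phi x)
      - 1 / Real.sqrt Real.pi * Phi (x * Real.sqrt 2)) ((1 - Phi x) ^ 2) x := by
  have hP := hasDerivAt_Phi x
  have hD := hasDerivAt_stdPDF x
  have hQ : HasDerivAt (fun x => 1 - Phi x) (-stdPDF x) x := by
    simpa using hP.const_sub 1
  have h1 : HasDerivAt (fun x => x * (1 - Phi x) ^ 2)
      (1 * (1 - Phi x) ^ 2 + x * (2 * (1 - Phi x) ^ 1 * -stdPDF x)) x :=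
    (hasDerivAt_id x).mul (hQ.pow 2)
  have h2 : HasDerivAt (fun x => 2 * stdPDF x * (1 - Phi x))
      (2 * (-x * stdPDF x) * (1 - Phi x) + 2 * stdPDF x * -stdPDF x) x :=
    (hD.const_mul 2).mul hQ
  have h3 : HasDerivAt (fun x => 1 / Real.sqrt Real.pi * Phi (x * Real.sqrt 2))
      (1 / Real.sqrt Real.pi * (Real.sqrt 2 * stdPDF (x * Real.sqrt 2))) x :=
    (hasDerivAt_Phi_sqrt2 x).const_mul _
  have h := (h1.sub h2).sub h3
  exact h.congr_deriv (by linear_combination pdf_sq x)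

lemma tendsto_H_atTop : Tendsto (fun x => x * (1 - Phi x) ^ 2 - 2 * stdPDF x * (1 - Phi x)
    - 1 / Real.sqrt Real.pi * Phi (x * Real.sqrt 2)) atTop
    (𝓝 (-(1 / Real.sqrt Real.pi))) := by
  have ha := tendsto_mul_sq_atTop
  have hb : Tendsto (fun x => 2 * stdPDF x * (1 - Phi x)) atTop (𝓝 (2 * 0 * (1 - 1))) :=
    ((tendsto_stdPDF_atTop.const_mul 2).mul (tendsto_const_nhds.sub tendsto_Phi_atTop))
  have hc : Tendsto (fun x => 1 / Real.sqrt Real.pi * Phi (x * Real.sqrt 2)) atTop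
      (𝓝 (1 / Real.sqrt Real.pi * 1)) := by
    refine Tendsto.const_mul _ (tendsto_Phi_atTop.comp ?_)
    exact Tendsto.atTop_mul_const (Real.sqrt_pos.mpr (by norm_num)) tendsto_id
  have := (ha.sub hb).sub hc
  simpa using this

lemma hasDerivAt_scaledG (μ σ : ℝ) (hσ : 0 < σ) (u : ℝ) :
    HasDerivAt (fun u => σ * ((u - μ) / σ * Phi ((u - μ) / σ) ^ 2
      + 2 * stdPDF ((u - μ) / σ) * Phi ((u - μ) / σ)
      - 1 / Real.sqrt Real.pi * Phi ((u - μ) / σ * Real.sqrt 2)))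
      (Phi ((u - μ) / σ) ^ 2) u := by
  have hlin : HasDerivAt (fun u : ℝ => (u - μ) / σ) (1 / σ) u := by
    simpa using ((hasDerivAt_id u).sub_const μ).div_const σ
  have h := ((hasDerivAt_G ((u - μ) / σ)).comp u hlin).const_mul σ
  exact h.congr_deriv (by field_simp [hσ.ne'])

lemma hasDerivAt_scaledH (μ σ : ℝ) (hσ : 0 < σ) (u : ℝ) :
    HasDerivAt (fun u => σ * ((u - μ) / σ * (1 - Phi ((u - μ) / σ)) ^ 2
      - 2 * stdPDF ((u - μ) / σ) * (1 - Phi ((u - μ) / σ))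
      - 1 / Real.sqrt Real.pi * Phi ((u - μ) / σ * Real.sqrt 2)))
      ((1 - Phi ((u - μ) / σ)) ^ 2) u := by
  have hlin : HasDerivAt (fun u : ℝ => (u - μ) / σ) (1 / σ) u := by
    simpa using ((hasDerivAt_id u).sub_const μ).div_const σ
  have h := ((hasDerivAt_H ((u - μ) / σ)).comp u hlin).const_mul σ
  exact h.congr_deriv (by field_simp [hσ.ne'])

lemma tendsto_scaledH (μ σ : ℝ) (hσ : 0 < σ) :
    Tendsto (fun u => σ * ((u - μ) / σ * (1 - Phi ((u - μ) / σ)) ^ 2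
      - 2 * stdPDF ((u - μ) / σ) * (1 - Phi ((u - μ) / σ))
      - 1 / Real.sqrt Real.pi * Phi ((u - μ) / σ * Real.sqrt 2))) atTop
      (𝓝 (σ * -(1 / Real.sqrt Real.pi))) := by
  have hcomp : Tendsto (fun u : ℝ => (u - μ) / σ) atTop atTop := by
    apply Tendsto.atTop_div_const hσ
    simpa [sub_eq_add_neg] using tendsto_atTop_add_const_right atTop (-μ) tendsto_id
  exact (tendsto_H_atTop.comp hcomp).const_mul σ

end AuxLemmas

theorem stmt_0 (μ σ t y : ℝ) (hσ : 0 < σ) :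
    twCRPS (gamma1 t) (normCDF μ σ) y =
      σ * (-((t - μ) / σ) * Phi ((t - μ) / σ) ^ 2
        + (max y t - μ) / σ * (2 * Phi ((max y t - μ) / σ) - 1)
        + 2 * stdPDF ((max y t - μ) / σ)
        - 2 * stdPDF ((t - μ) / σ) * Phi ((t - μ) / σ)
        - 1 / Real.sqrt Real.pi * (1 - Phi ((t - μ) / σ * Real.sqrt 2))) := by
  have htm : t ≤ max y t := le_max_right y t
  have hym : y ≤ max y t := le_max_left y t
  set m := max y t with hm
  have hγ : gamma1 t = volume.restrict (Ici t) := by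
    rw [gamma1]; exact withDensity_indicator_one measurableSet_Ici
  rw [twCRPS, hγ]
  set F : ℝ → ℝ := fun u => (normCDF μ σ u - (Ici y).indicator (fun _ => (1:ℝ)) u) ^ 2 with hF
  have hEq1 : EqOn F (fun u => Phi ((u - μ) / σ) ^ 2) (Ico t m) := by
    intro u hu
    have huy : u < y := by
      rcases lt_max_iff.mp hu.2 with h | h
      · exact h
      · exact absurd hu.1 (not_le.mpr h)
    have hz : (Ici y).indicator (fun _ => (1:ℝ)) u = 0 :=
      indicator_of_notMem (notMem_Ici.mpr huy) _
    simp [hF, normCDF, hz]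
  have hEq2 : EqOn F (fun u => (1 - Phi ((u - μ) / σ)) ^ 2) (Ici m) := by
    intro u hu
    have hyu : u ∈ Ici y := le_trans hym hu
    simp only [hF, normCDF, indicator_of_mem hyu]
    ring
  have hcont : Continuous (fun u => Phi ((u - μ) / σ) ^ 2) :=
    (continuous_Phi.comp (by fun_prop)).pow 2
  have hint1 : IntegrableOn F (Ico t m) :=
    ((hcont.integrableOn_Icc).mono_set Ico_subset_Icc_self).congr_fun
      hEq1.symm measurableSet_Ico
  have hIoi_int : IntegrableOn (fun u => (1 - Phi ((u - μ) / σ)) ^ 2) (Ioi m) :=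
    integrableOn_Ioi_deriv_of_nonneg' (l := σ * -(1 / Real.sqrt Real.pi))
      (fun u _ => hasDerivAt_scaledH μ σ hσ u) (fun u _ => sq_nonneg _)
      (tendsto_scaledH μ σ hσ)
  have hint2 : IntegrableOn F (Ici m) :=
    (Iff.mpr integrableOn_Ici_iff_integrableOn_Ioi hIoi_int).congr_fun
      hEq2.symm measurableSet_Ici
  have hdisj : Disjoint (Ico t m) (Ici m) := by
    rw [Set.disjoint_left]
    intro u hu hu'
    exact absurd hu' (not_le.mpr hu.2)
  have hsplit : ∫ u in Ici t, F u = (∫ u in Ico t m, F u) + ∫ u in Ici m, F u := by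
    rw [← setIntegral_union hdisj measurableSet_Ici hint1 hint2, Ico_union_Ici_eq_Ici htm]
  have hA : ∫ u in Ico t m, F u =
      (σ * ((m - μ) / σ * Phi ((m - μ) / σ) ^ 2
        + 2 * stdPDF ((m - μ) / σ) * Phi ((m - μ) / σ)
        - 1 / Real.sqrt Real.pi * Phi ((m - μ) / σ * Real.sqrt 2)))
      - (σ * ((t - μ) / σ * Phi ((t - μ) / σ) ^ 2
        + 2 * stdPDF ((t - μ) / σ) * Phi ((t - μ) / σ)
        - 1 / Real.sqrt Real.pi * Phi ((t - μ) / σ * Real.sqrt 2))) := by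
    rw [setIntegral_congr_fun measurableSet_Ico hEq1, integral_Ico_eq_integral_Ioo,
      ← integral_Ioc_eq_integral_Ioo, ← intervalIntegral.integral_of_le htm]
    exact intervalIntegral.integral_eq_sub_of_hasDerivAt
      (fun u _ => hasDerivAt_scaledG μ σ hσ u) (hcont.intervalIntegrable _ _)
  have hB : ∫ u in Ici m, F u = σ * -(1 / Real.sqrt Real.pi)
      - (σ * ((m - μ) / σ * (1 - Phi ((m - μ) / σ)) ^ 2
        - 2 * stdPDF ((m - μ) / σ) * (1 - Phi ((m - μ) / σ))
        - 1 / Real.sqrt Real.pi * Phi ((m - μ) / σ * Real.sqrt 2))) := by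
    rw [setIntegral_congr_fun measurableSet_Ici hEq2, integral_Ici_eq_integral_Ioi]
    exact integral_Ioi_of_hasDerivAt_of_nonneg'
      (fun u _ => hasDerivAt_scaledH μ σ hσ u) (fun u _ => sq_nonneg _)
      (tendsto_scaledH μ σ hσ)
  rw [hsplit, hA, hB]
  ring
end

section
/- Let μ ∈ ℝ, α ∈ ℝ, σ > 0 and t ∈ ℝ, and let N, Ñ, V be independent standard normal random variables. Then the expectation over V of the expected threshold-weighted CRPS of the Gaussian distribution with random mean μ + α·V and variance σ², with weighting measure γ₁ having Lebesgue density u ↦ 1{u ≥ t}, satisfies E_V[ CRPS_{γ₁}(Φ_{μ+αV, σ²}) ] = σ · E[ ( N − max( Ñ, (t − μ − α·V)/σ ) )₊ ], where x₊ = max(x, 0) and the right-hand expectation is over the joint law of (N, Ñ, V). -/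
open MeasureTheory ProbabilityTheory Set ENNReal

noncomputable section

instance : IsProbabilityMeasure stdNormal := by
  unfold stdNormal; infer_instance

instance : NullSingletonClass stdNormal := by
  constructor
  intro x
  exact gaussianReal_absolutelyContinuous 0 one_ne_zero (by simp)

lemma measurable_stdIic : Measurable fun s => stdNormal (Iic s) :=
  Monotone.measurable (fun a b hab => measure_mono (Iic_subset_Iic.mpr hab))

lemma gaussMeasure_eq_map {σ : ℝ} (hσ : 0 < σ) (m : ℝ) :
    gaussMeasure m σ = stdNormal.map (fun x => σ * x + m) := by
  have h1 : (stdNormal.map (σ * ·)) = gaussianReal (σ * 0) (⟨σ ^ 2, sq_nonneg σ⟩ * 1) :=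
    gaussianReal_map_const_mul σ
  have h2 : stdNormal.map (fun x => σ * x + m)
      = (stdNormal.map (σ * ·)).map (· + m) := by
    rw [Measure.map_map (measurable_id'.add_const m) (measurable_const_mul σ)]
    rfl
  rw [h2, h1, gaussianReal_map_add_const m]
  unfold gaussMeasure
  congr 1
  · simp
  · exact (mul_one _).symm

lemma gaussMeasure_Iic {σ : ℝ} (hσ : 0 < σ) (m u : ℝ) :
    gaussMeasure m σ (Iic u) = stdNormal (Iic ((u - m) / σ)) := by
  rw [gaussMeasure_eq_map hσ m,
    Measure.map_apply (by fun_prop) measurableSet_Iic]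
  congr 1
  ext x
  simp only [mem_preimage, mem_Iic]
  rw [le_div_iff₀ hσ]
  constructor <;> intro h <;> linarith

lemma normCDF_eq {σ : ℝ} (hσ : 0 < σ) (m u : ℝ) :
    normCDF m σ u = (gaussMeasure m σ (Iic u)).toReal := by
  rw [gaussMeasure_Iic hσ]; rfl

lemma moment_stdNormal : ∫⁻ x, ENNReal.ofReal |x| ∂stdNormal ≠ ∞ := by
  have h : stdNormal = volume.withDensity (gaussianPDF 0 1) :=
    gaussianReal_of_var_ne_zero 0 one_ne_zero
  rw [h, lintegral_withDensity_eq_lintegral_mul _ (measurable_gaussianPDF 0 1)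
    (by fun_prop)]
  have heq : ∀ x : ℝ, (gaussianPDF 0 1 * fun x => ENNReal.ofReal |x|) x
      = ENNReal.ofReal (gaussianPDFReal 0 1 x * |x|) := by
    intro x
    simp only [Pi.mul_apply, gaussianPDF]
    rw [← ENNReal.ofReal_mul (gaussianPDFReal_nonneg 0 1 x)]
  simp only [heq]
  have hint : Integrable (fun x : ℝ => gaussianPDFReal 0 1 x * |x|) := by
    have h1 : Integrable (fun x : ℝ => x * Real.exp (-(1/2 : ℝ) * x ^ 2)) :=
      integrable_mul_exp_neg_mul_sq (by norm_num)
    have h3 := h1.abs.const_mul ((Real.sqrt (2 * Real.pi))⁻¹)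
    refine h3.congr (Filter.Eventually.of_forall fun x => ?_)
    unfold gaussianPDFReal
    simp only [NNReal.coe_one, mul_one, sub_zero]
    rw [abs_mul, abs_of_pos (Real.exp_pos _)]
    ring_nf
  exact hint.lintegral_lt_top.ne

lemma moment_gauss {σ : ℝ} (hσ : 0 < σ) (m : ℝ) :
    ∫⁻ x, ENNReal.ofReal |x| ∂(gaussMeasure m σ) ≠ ∞ := by
  rw [gaussMeasure_eq_map hσ m, lintegral_map (by fun_prop) (by fun_prop)]
  have hb : ∀ x : ℝ, ENNReal.ofReal |σ * x + m|
      ≤ ENNReal.ofReal σ * ENNReal.ofReal |x| + ENNReal.ofReal |m| := by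
    intro x
    rw [← ENNReal.ofReal_mul hσ.le, ← ENNReal.ofReal_add (by positivity) (abs_nonneg m)]
    apply ENNReal.ofReal_le_ofReal
    calc |σ * x + m| ≤ |σ * x| + |m| := abs_add_le _ _
      _ = σ * |x| + |m| := by rw [abs_mul, abs_of_pos hσ]
  have hle : ∫⁻ x, ENNReal.ofReal |σ * x + m| ∂stdNormal
      ≤ ∫⁻ x, (ENNReal.ofReal σ * ENNReal.ofReal |x| + ENNReal.ofReal |m|) ∂stdNormal :=
    lintegral_mono hb
  have h2 : ∫⁻ x, (ENNReal.ofReal σ * ENNReal.ofReal |x| + ENNReal.ofReal |m|) ∂stdNormal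
      = ENNReal.ofReal σ * (∫⁻ x, ENNReal.ofReal |x| ∂stdNormal) + ENNReal.ofReal |m| := by
    rw [lintegral_add_right _ measurable_const, lintegral_const_mul _ (by fun_prop),
      lintegral_const, measure_univ, mul_one]
  intro htop
  rw [htop] at hle
  rw [h2] at hle
  exact (ENNReal.add_ne_top.mpr
    ⟨ENNReal.mul_ne_top ofReal_ne_top moment_stdNormal, ofReal_ne_top⟩) (top_le_iff.mp hle)

lemma indicator_swap_Ioi (u x : ℝ) :
    (Ioi u).indicator (fun _ => (1:ℝ≥0∞)) x = (Iio x).indicator (fun _ => (1:ℝ≥0∞)) u := by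
  by_cases h : u < x <;> simp [h, not_lt.mp]

lemma indicator_swap_Iic (u x : ℝ) :
    (Iic u).indicator (fun _ => (1:ℝ≥0∞)) x = (Ici x).indicator (fun _ => (1:ℝ≥0∞)) u := by
  by_cases h : x ≤ u <;> simp [h]

lemma meas_ind_lt : Measurable (fun p : ℝ × ℝ => (Iio p.2).indicator (fun _ => (1:ℝ≥0∞)) p.1) := by
  have : (fun p : ℝ × ℝ => (Iio p.2).indicator (fun _ => (1:ℝ≥0∞)) p.1)
      = {q : ℝ × ℝ | q.1 < q.2}.indicator (fun _ => 1) := by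
    ext p; by_cases h : p.1 < p.2 <;> simp [h, not_lt.mp]
  rw [this]
  exact measurable_const.indicator (measurableSet_lt measurable_fst measurable_snd)

lemma meas_ind_ge : Measurable (fun p : ℝ × ℝ => (Ici p.2).indicator (fun _ => (1:ℝ≥0∞)) p.1) := by
  have : (fun p : ℝ × ℝ => (Ici p.2).indicator (fun _ => (1:ℝ≥0∞)) p.1)
      = {q : ℝ × ℝ | q.2 ≤ q.1}.indicator (fun _ => 1) := by
    ext p; by_cases h : p.2 ≤ p.1 <;> simp [h]
  rw [this]
  exact measurable_const.indicator (measurableSet_le measurable_snd measurable_fst)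

lemma tail_Ioi {σ : ℝ} (hσ : 0 < σ) (m c : ℝ) :
    ∫⁻ u in Ici c, gaussMeasure m σ (Ioi u) ≠ ∞ := by
  have hprob : IsProbabilityMeasure (gaussMeasure m σ) := by unfold gaussMeasure; exact instIsProbabilityMeasureGaussianReal _ _
  set P := gaussMeasure m σ with hP
  have key : ∀ u : ℝ, P (Ioi u) = ∫⁻ x, (Iio x).indicator (fun _ => (1:ℝ≥0∞)) u ∂P := by
    intro u
    rw [← lintegral_indicator_one measurableSet_Ioi]
    exact lintegral_congr fun x => indicator_swap_Ioi u x
  have this : ∫⁻ u in Ici c, P (Ioi u) ≤ ∫⁻ x, (ENNReal.ofReal |x| + ENNReal.ofReal |c|) ∂P := calc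
    ∫⁻ u in Ici c, P (Ioi u)
      = ∫⁻ u in Ici c, ∫⁻ x, (Iio x).indicator (fun _ => (1:ℝ≥0∞)) u ∂P := by
        exact lintegral_congr fun u => key u
    _ = ∫⁻ x, (∫⁻ u in Ici c, (Iio x).indicator (fun _ => (1:ℝ≥0∞)) u) ∂P := by
        exact lintegral_lintegral_swap (μ := volume.restrict (Ici c)) (ν := P)
          (f := fun u x => (Iio x).indicator (fun _ => (1:ℝ≥0∞)) u) meas_ind_lt.aemeasurable
    _ = ∫⁻ x, volume (Iio x ∩ Ici c) ∂P := by
        refine lintegral_congr fun x => ?_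
        rw [lintegral_indicator measurableSet_Iio, Measure.restrict_restrict measurableSet_Iio]
        simp
    _ ≤ ∫⁻ x, (ENNReal.ofReal |x| + ENNReal.ofReal |c|) ∂P := by
        refine lintegral_mono fun x => ?_
        have : Iio x ∩ Ici c = Ico c x := by ext z; simp [mem_Ico, and_comm]
        rw [this, Real.volume_Ico, ← ENNReal.ofReal_add (abs_nonneg x) (abs_nonneg c)]
        apply ENNReal.ofReal_le_ofReal
        have := abs_nonneg x; have := abs_nonneg c
        have h1 : x ≤ |x| := le_abs_self x
        have h2 : -c ≤ |c| := neg_le_abs c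
        linarith
  intro htop
  rw [htop] at this
  have h5 : ∫⁻ x, (ENNReal.ofReal |x| + ENNReal.ofReal |c|) ∂P ≠ ∞ := by
    rw [lintegral_add_right _ measurable_const, lintegral_const, measure_univ, mul_one]
    exact ENNReal.add_ne_top.mpr ⟨moment_gauss hσ m, ENNReal.ofReal_ne_top⟩
  exact h5 (top_le_iff.mp this)

lemma tail_Iic {σ : ℝ} (hσ : 0 < σ) (m c : ℝ) :
    ∫⁻ u in Iic c, gaussMeasure m σ (Iic u) ≠ ∞ := by
  have hprob : IsProbabilityMeasure (gaussMeasure m σ) := by unfold gaussMeasure; exact instIsProbabilityMeasureGaussianReal _ _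
  set P := gaussMeasure m σ with hP
  have key : ∀ u : ℝ, P (Iic u) = ∫⁻ x, (Ici x).indicator (fun _ => (1:ℝ≥0∞)) u ∂P := by
    intro u
    rw [← lintegral_indicator_one measurableSet_Iic]
    exact lintegral_congr fun x => indicator_swap_Iic u x
  have this : ∫⁻ u in Iic c, P (Iic u) ≤ ∫⁻ x, (ENNReal.ofReal |x| + ENNReal.ofReal |c|) ∂P := calc
    ∫⁻ u in Iic c, P (Iic u)
      = ∫⁻ u in Iic c, ∫⁻ x, (Ici x).indicator (fun _ => (1:ℝ≥0∞)) u ∂P := by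
        exact lintegral_congr fun u => key u
    _ = ∫⁻ x, (∫⁻ u in Iic c, (Ici x).indicator (fun _ => (1:ℝ≥0∞)) u) ∂P := by
        exact lintegral_lintegral_swap (μ := volume.restrict (Iic c)) (ν := P)
          (f := fun u x => (Ici x).indicator (fun _ => (1:ℝ≥0∞)) u) meas_ind_ge.aemeasurable
    _ = ∫⁻ x, volume (Ici x ∩ Iic c) ∂P := by
        refine lintegral_congr fun x => ?_
        rw [lintegral_indicator measurableSet_Ici, Measure.restrict_restrict measurableSet_Ici]
        simp
    _ ≤ ∫⁻ x, (ENNReal.ofReal |x| + ENNReal.ofReal |c|) ∂P := by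
        refine lintegral_mono fun x => ?_
        have : Ici x ∩ Iic c = Icc x c := by ext z; simp [mem_Icc]
        rw [this, Real.volume_Icc, ← ENNReal.ofReal_add (abs_nonneg x) (abs_nonneg c)]
        apply ENNReal.ofReal_le_ofReal
        have h1 : -x ≤ |x| := neg_le_abs x
        have h2 : c ≤ |c| := le_abs_self c
        linarith
  intro htop
  rw [htop] at this
  have h5 : ∫⁻ x, (ENNReal.ofReal |x| + ENNReal.ofReal |c|) ∂P ≠ ∞ := by
    rw [lintegral_add_right _ measurable_const, lintegral_const, measure_univ, mul_one]
    exact ENNReal.add_ne_top.mpr ⟨moment_gauss hσ m, ENNReal.ofReal_ne_top⟩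
  exact h5 (top_le_iff.mp this)

lemma gauss_Ioi {σ : ℝ} (hσ : 0 < σ) (m u : ℝ) :
    gaussMeasure m σ (Ioi u) = 1 - gaussMeasure m σ (Iic u) := by
  have : IsProbabilityMeasure (gaussMeasure m σ) := by unfold gaussMeasure; exact instIsProbabilityMeasureGaussianReal _ _
  rw [← compl_Iic, measure_compl measurableSet_Iic (measure_ne_top _ _), measure_univ]

lemma J_lt_top {σ : ℝ} (hσ : 0 < σ) (m t : ℝ) :
    ∫⁻ u in Ici t, gaussMeasure m σ (Iic u) * (1 - gaussMeasure m σ (Iic u)) ≠ ∞ := by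
  have : IsProbabilityMeasure (gaussMeasure m σ) := by unfold gaussMeasure; exact instIsProbabilityMeasureGaussianReal _ _
  set P := gaussMeasure m σ with hP
  set f : ℝ → ℝ≥0∞ := fun u => P (Iic u) * (1 - P (Iic u)) with hf
  have h1 : ∫⁻ u in Ici t, f u ≤ ∫⁻ u, f u := setLIntegral_le_lintegral _ _
  have h2 : ∫⁻ u, f u = (∫⁻ u in Iic m, f u) + ∫⁻ u in Ioi m, f u := by
    rw [← compl_Iic]
    exact (lintegral_add_compl f measurableSet_Iic).symm
  have h3 : ∫⁻ u in Iic m, f u ≤ ∫⁻ u in Iic m, P (Iic u) := by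
    refine lintegral_mono fun u => ?_
    exact mul_le_of_le_one_right zero_le tsub_le_self
  have h4 : ∫⁻ u in Ioi m, f u ≤ ∫⁻ u in Ici m, P (Ioi u) := by
    refine le_trans (lintegral_mono fun u => ?_) (lintegral_mono_set Ioi_subset_Ici_self)
    show P (Iic u) * (1 - P (Iic u)) ≤ P (Ioi u)
    rw [gauss_Ioi hσ]
    exact mul_le_of_le_one_left zero_le prob_le_one
  intro htop
  have : (∫⁻ u in Iic m, P (Iic u)) + ∫⁻ u in Ici m, P (Ioi u) = ∞ := by
    have := le_trans h1 (le_of_eq h2)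
    rw [htop] at this
    exact top_le_iff.mp (le_trans this (add_le_add h3 h4))
  exact (ENNReal.add_ne_top.mpr ⟨tail_Iic hσ m m, tail_Ioi hσ m m⟩) this

lemma gamma1_eq (t : ℝ) : gamma1 t = volume.restrict (Ici t) := by
  unfold gamma1
  exact withDensity_indicator_one measurableSet_Ici

lemma measurable_Phi : Measurable Phi :=
  ENNReal.measurable_toReal.comp measurable_stdIic

lemma measurable_normCDF (m σ : ℝ) : Measurable (normCDF m σ) :=
  measurable_Phi.comp ((measurable_id.sub_const m).div_const σ)

lemma measurable_gaussIic (m σ : ℝ) : Measurable fun u => gaussMeasure m σ (Iic u) :=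
  Monotone.measurable (fun _ _ hab => measure_mono (Iic_subset_Iic.mpr hab))

lemma indicator_flip (y u : ℝ) :
    (Ici y).indicator (fun _ => (1:ℝ)) u = (Iic u).indicator (fun _ => (1:ℝ)) y := by
  by_cases h : y ≤ u <;> simp [h]

lemma sq_expand (p : ℝ) (y u : ℝ) :
    (p - (Iic u).indicator (fun _ => (1:ℝ)) y) ^ 2
      = p ^ 2 - (2 * p - 1) * (Iic u).indicator (fun _ => (1:ℝ)) y := by
  by_cases h : y ≤ u <;> simp [h] <;> ring

lemma integrable_sq_ind {σ : ℝ} (m u : ℝ) (p : ℝ) :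
    Integrable (fun y => (p - (Iic u).indicator (fun _ => (1:ℝ)) y) ^ 2) (gaussMeasure m σ) := by
  have hprob : IsProbabilityMeasure (gaussMeasure m σ) := by unfold gaussMeasure; exact instIsProbabilityMeasureGaussianReal _ _
  have h1 : Integrable (fun y => p ^ 2 - (2 * p - 1) * (Iic u).indicator (fun _ => (1:ℝ)) y)
      (gaussMeasure m σ) := by
    apply (integrable_const _).sub
    exact (((integrable_const (1:ℝ)).indicator measurableSet_Iic).const_mul _)
  exact h1.congr (Filter.Eventually.of_forall fun y => (sq_expand p y u).symm)

lemma inner_y {σ : ℝ} (hσ : 0 < σ) (m u : ℝ) :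
    ∫ y, (normCDF m σ u - (Iic u).indicator (fun _ => (1:ℝ)) y) ^ 2 ∂(gaussMeasure m σ)
      = normCDF m σ u * (1 - normCDF m σ u) := by
  have hprob : IsProbabilityMeasure (gaussMeasure m σ) := by unfold gaussMeasure; exact instIsProbabilityMeasureGaussianReal _ _
  set p := normCDF m σ u with hp
  have h1 : ∫ y, (p - (Iic u).indicator (fun _ => (1:ℝ)) y) ^ 2 ∂(gaussMeasure m σ)
      = ∫ y, (p ^ 2 - (2 * p - 1) * (Iic u).indicator (fun _ => (1:ℝ)) y) ∂(gaussMeasure m σ) :=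
    integral_congr_ae (Filter.Eventually.of_forall fun y => sq_expand p y u)
  rw [h1, integral_sub (integrable_const _)
    (((integrable_const (1:ℝ)).indicator measurableSet_Iic).const_mul _),
    integral_const, integral_const_mul, integral_indicator_const (1:ℝ) measurableSet_Iic]
  have h2 : (gaussMeasure m σ (Iic u)).toReal = p := (normCDF_eq hσ m u).symm
  simp only [measure_univ, probReal_univ, ENNReal.toReal_one, one_smul, smul_eq_mul, mul_one, measureReal_def, h2]
  ring

lemma ofReal_pq {σ : ℝ} (hσ : 0 < σ) (m u : ℝ) :
    ENNReal.ofReal (normCDF m σ u * (1 - normCDF m σ u))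
      = gaussMeasure m σ (Iic u) * (1 - gaussMeasure m σ (Iic u)) := by
  have hprob : IsProbabilityMeasure (gaussMeasure m σ) := by unfold gaussMeasure; exact instIsProbabilityMeasureGaussianReal _ _
  set A := gaussMeasure m σ (Iic u) with hA
  have hA1 : A ≤ 1 := prob_le_one
  have hAne : A ≠ ∞ := measure_ne_top _ _
  have h1 : normCDF m σ u = A.toReal := normCDF_eq hσ m u
  have h2 : (1:ℝ) - A.toReal = (1 - A).toReal := by
    rw [ENNReal.toReal_sub_of_le hA1 ENNReal.one_ne_top, ENNReal.toReal_one]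
  rw [h1, h2, ← ENNReal.toReal_mul, ENNReal.ofReal_toReal]
  exact ENNReal.mul_ne_top hAne (ENNReal.sub_ne_top ENNReal.one_ne_top)

lemma ofReal_one_sub {σ : ℝ} (hσ : 0 < σ) (m u : ℝ) :
    ENNReal.ofReal (1 - normCDF m σ u) = 1 - gaussMeasure m σ (Iic u) := by
  have hprob : IsProbabilityMeasure (gaussMeasure m σ) := by unfold gaussMeasure; exact instIsProbabilityMeasureGaussianReal _ _
  have hA1 : gaussMeasure m σ (Iic u) ≤ 1 := prob_le_one
  rw [normCDF_eq hσ, show (1:ℝ) - (gaussMeasure m σ (Iic u)).toReal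
      = (1 - gaussMeasure m σ (Iic u)).toReal by
    rw [ENNReal.toReal_sub_of_le hA1 ENNReal.one_ne_top, ENNReal.toReal_one],
    ENNReal.ofReal_toReal (ENNReal.sub_ne_top ENNReal.one_ne_top)]

lemma normCDF_mem01 {σ : ℝ} (hσ : 0 < σ) (m u : ℝ) :
    0 ≤ normCDF m σ u ∧ normCDF m σ u ≤ 1 := by
  have hprob : IsProbabilityMeasure (gaussMeasure m σ) := by unfold gaussMeasure; exact instIsProbabilityMeasureGaussianReal _ _
  rw [normCDF_eq hσ]
  refine ⟨ENNReal.toReal_nonneg, ?_⟩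
  rw [show (1:ℝ) = (1:ℝ≥0∞).toReal from ENNReal.toReal_one.symm]
  exact ENNReal.toReal_mono ENNReal.one_ne_top prob_le_one

lemma L_meas (m σ : ℝ) :
    Measurable fun q : ℝ × ℝ =>
      ENNReal.ofReal ((normCDF m σ q.1 - (Iic q.1).indicator (fun _ => (1:ℝ)) q.2) ^ 2) := by
  apply ENNReal.measurable_ofReal.comp
  apply Measurable.pow_const
  apply Measurable.sub
  · exact (measurable_normCDF m σ).comp measurable_fst
  · have h : (fun q : ℝ × ℝ => (Iic q.1).indicator (fun _ => (1:ℝ)) q.2)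
        = {q : ℝ × ℝ | q.2 ≤ q.1}.indicator (fun _ => 1) := by
      ext q; by_cases h : q.2 ≤ q.1 <;> simp [h]
    rw [h]
    exact measurable_const.indicator (measurableSet_le measurable_snd measurable_fst)

lemma L_fin {σ : ℝ} (hσ : 0 < σ) (m t y : ℝ) :
    ∫⁻ u in Ici t, ENNReal.ofReal ((normCDF m σ u - (Iic u).indicator (fun _ => (1:ℝ)) y) ^ 2)
      ≠ ∞ := by
  set A : ℝ → ℝ≥0∞ := fun u => gaussMeasure m σ (Iic u) with hA
  have hbound : ∀ u, (Ici t).indicator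
      (fun u => ENNReal.ofReal ((normCDF m σ u - (Iic u).indicator (fun _ => (1:ℝ)) y) ^ 2)) u
      ≤ (Icc t y).indicator (fun _ => (1:ℝ≥0∞)) u + (Ici y).indicator (fun u => 1 - A u) u := by
    intro u
    by_cases hu : t ≤ u
    · rw [indicator_of_mem (mem_Ici.mpr hu)]
      by_cases hy : y ≤ u
      · have hind : (Iic u).indicator (fun _ => (1:ℝ)) y = 1 :=
          indicator_of_mem (mem_Iic.mpr hy) _
        rw [hind]
        have h1 : (normCDF m σ u - 1) ^ 2 ≤ 1 - normCDF m σ u := by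
          obtain ⟨ha, hb⟩ := normCDF_mem01 hσ m u
          nlinarith
        have hle : ENNReal.ofReal ((normCDF m σ u - 1) ^ 2) ≤ 1 - A u := by
          refine le_trans (ENNReal.ofReal_le_ofReal h1) ?_
          rw [ofReal_one_sub hσ m u]
        refine le_trans ?_ (self_le_add_left _ _)
        rw [indicator_of_mem (mem_Ici.mpr hy)]
        exact hle
      · have hind : (Iic u).indicator (fun _ => (1:ℝ)) y = 0 :=
          indicator_of_notMem (by simpa using not_le.mp hy) _
        rw [hind, sub_zero]
        have h1 : ENNReal.ofReal (normCDF m σ u ^ 2) ≤ 1 := by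
          apply ENNReal.ofReal_le_one.mpr
          obtain ⟨ha, hb⟩ := normCDF_mem01 hσ m u
          nlinarith
        refine le_trans ?_ (self_le_add_right _ _)
        rw [indicator_of_mem (mem_Icc.mpr ⟨hu, (not_le.mp hy).le⟩)]
        exact h1
    · rw [indicator_of_notMem (by simpa using not_le.mp hu)]
      exact zero_le
  rw [← lintegral_indicator measurableSet_Ici]
  intro htop
  have hle := lintegral_mono (μ := volume) hbound
  rw [htop] at hle
  have hrhs : ∫⁻ u, ((Icc t y).indicator (fun _ => (1:ℝ≥0∞)) u
      + (Ici y).indicator (fun u => 1 - A u) u) ≠ ∞ := by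
    rw [lintegral_add_left (measurable_const.indicator measurableSet_Icc)]
    apply ENNReal.add_ne_top.mpr
    constructor
    · rw [lintegral_indicator measurableSet_Icc, setLIntegral_one, Real.volume_Icc]
      exact ENNReal.ofReal_ne_top
    · rw [lintegral_indicator measurableSet_Ici,
        show (fun u => 1 - A u) = fun u => gaussMeasure m σ (Ioi u) from
          funext fun u => (gauss_Ioi hσ m u).symm]
      exact tail_Ioi hσ m y
  exact hrhs (top_le_iff.mp hle)

lemma etw_eq {σ : ℝ} (hσ : 0 < σ) (t m : ℝ) :
    etwCRPS (gamma1 t) m σ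
      = (∫⁻ u in Ici t, gaussMeasure m σ (Iic u) * (1 - gaussMeasure m σ (Iic u))).toReal := by
  have hprob : IsProbabilityMeasure (gaussMeasure m σ) := by unfold gaussMeasure; exact instIsProbabilityMeasureGaussianReal _ _
  set L : ℝ → ℝ≥0∞ := fun y =>
    ∫⁻ u in Ici t, ENNReal.ofReal ((normCDF m σ u - (Iic u).indicator (fun _ => (1:ℝ)) y) ^ 2)
    with hL
  have step1 : ∀ y, twCRPS (gamma1 t) (normCDF m σ) y = (L y).toReal := by
    intro y
    unfold twCRPS
    rw [gamma1_eq]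
    rw [integral_eq_lintegral_of_nonneg_ae (f := fun u => (normCDF m σ u - (Ici y).indicator (fun _ => (1:ℝ)) u) ^ 2) (Filter.Eventually.of_forall fun u => sq_nonneg _)
      (((measurable_normCDF m σ).sub
        (measurable_const.indicator measurableSet_Ici)).pow_const 2).aestronglyMeasurable]
    have : ∀ u : ℝ, ENNReal.ofReal ((normCDF m σ u - (Ici y).indicator (fun _ => (1:ℝ)) u) ^ 2)
        = ENNReal.ofReal ((normCDF m σ u - (Iic u).indicator (fun _ => (1:ℝ)) y) ^ 2) := by
      intro u; rw [indicator_flip]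
    rw [lintegral_congr this]
  have hLmeas : Measurable L :=
    Measurable.lintegral_prod_left (L_meas m σ)
  have hLfin : ∀ y, L y < ∞ := fun y => lt_top_iff_ne_top.mpr (L_fin hσ m t y)
  calc etwCRPS (gamma1 t) m σ = ∫ y, (L y).toReal ∂(gaussMeasure m σ) := by
        unfold etwCRPS; exact integral_congr_ae (.of_forall step1)
    _ = (∫⁻ y, L y ∂(gaussMeasure m σ)).toReal :=
        integral_toReal hLmeas.aemeasurable (.of_forall hLfin)
    _ = (∫⁻ u in Ici t, (∫⁻ y, ENNReal.ofReal
          ((normCDF m σ u - (Iic u).indicator (fun _ => (1:ℝ)) y) ^ 2)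
          ∂(gaussMeasure m σ))).toReal := by
        congr 1
        exact lintegral_lintegral_swap (μ := gaussMeasure m σ) (ν := volume.restrict (Ici t))
          (f := fun y u => ENNReal.ofReal
            ((normCDF m σ u - (Iic u).indicator (fun _ => (1:ℝ)) y) ^ 2))
          ((L_meas m σ).comp measurable_swap).aemeasurable
    _ = (∫⁻ u in Ici t, gaussMeasure m σ (Iic u) * (1 - gaussMeasure m σ (Iic u))).toReal := by
        congr 1
        refine lintegral_congr fun u => ?_
        rw [← ofReal_pq hσ m u, ← inner_y hσ m u]
        exact (ofReal_integral_eq_lintegral_ofReal (integrable_sq_ind m u _)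
          (.of_forall fun y => sq_nonneg _)).symm

lemma map_affine {σ : ℝ} (hσ : 0 < σ) (m : ℝ) :
    Measure.map (fun s : ℝ => σ * s + m) volume = ENNReal.ofReal σ⁻¹ • volume := by
  have h1 : Measure.map (σ * ·) volume = ENNReal.ofReal |σ⁻¹| • volume :=
    Real.map_volume_mul_left hσ.ne'
  have h2 : (fun s : ℝ => σ * s + m) = (· + m) ∘ (σ * ·) := rfl
  rw [h2, ← Measure.map_map (measurable_add_const m) (measurable_const_mul σ), h1,
    Measure.map_smul, map_add_right_eq_self volume m, abs_of_pos (inv_pos.mpr hσ)]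

lemma lintegral_scale {σ : ℝ} (hσ : 0 < σ) (m : ℝ) (g : ℝ → ℝ≥0∞) (hg : Measurable g) :
    ∫⁻ u, g u = ENNReal.ofReal σ * ∫⁻ s, g (σ * s + m) := by
  have h := lintegral_map (μ := volume) hg (show Measurable fun s : ℝ => σ * s + m by fun_prop)
  rw [map_affine hσ m, lintegral_smul_measure, smul_eq_mul] at h
  rw [← h, ← mul_assoc, ← ENNReal.ofReal_mul hσ.le, mul_inv_cancel₀ hσ.ne',
    ENNReal.ofReal_one, one_mul]

lemma setLIntegral_scale {σ : ℝ} (hσ : 0 < σ) (m t : ℝ) (g : ℝ → ℝ≥0∞) (hg : Measurable g) :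
    ∫⁻ u in Ici t, g ((u - m) / σ)
      = ENNReal.ofReal σ * ∫⁻ s in Ici ((t - m) / σ), g s := by
  rw [← lintegral_indicator measurableSet_Ici, ← lintegral_indicator measurableSet_Ici,
    lintegral_scale hσ m ((Ici t).indicator fun u => g ((u - m) / σ))
      ((hg.comp ((measurable_id.sub_const m).div_const σ)).indicator measurableSet_Ici)]
  congr 1
  refine lintegral_congr fun s => ?_
  by_cases h : (t - m) / σ ≤ s
  · have ht : t ≤ σ * s + m := by
      rw [div_le_iff₀ hσ] at h; linarith
    rw [indicator_of_mem (mem_Ici.mpr ht), indicator_of_mem (mem_Ici.mpr h)]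
    congr 1
    field_simp
    ring
  · have ht : ¬ t ≤ σ * s + m := by
      rw [div_le_iff₀ hσ] at h
      intro hc; exact h (by linarith)
    rw [indicator_of_notMem (by simpa using ht), indicator_of_notMem (by simpa using h)]

lemma measurable_stdIio : Measurable fun s => stdNormal (Iio s) :=
  Monotone.measurable (fun _ _ hab => measure_mono (Iio_subset_Iio hab))

lemma std_Ici (s : ℝ) : stdNormal (Ici s) = 1 - stdNormal (Iic s) := by
  rw [← measure_congr (Ioi_ae_eq_Ici (μ := stdNormal)), ← compl_Iic,
    measure_compl measurableSet_Iic (measure_ne_top _ _), measure_univ]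

lemma std_Iio (s : ℝ) : stdNormal (Iio s) = stdNormal (Iic s) :=
  measure_congr (Iio_ae_eq_Iic (μ := stdNormal))

lemma meas_ind_le : Measurable fun p : ℝ × ℝ => (Iic p.1).indicator (fun _ => (1:ℝ≥0∞)) p.2 := by
  have h : (fun p : ℝ × ℝ => (Iic p.1).indicator (fun _ => (1:ℝ≥0∞)) p.2)
      = {q : ℝ × ℝ | q.2 ≤ q.1}.indicator (fun _ => 1) := by
    ext q; by_cases h : q.2 ≤ q.1 <;> simp [h]
  rw [h]
  exact measurable_const.indicator (measurableSet_le measurable_snd measurable_fst)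

lemma lint_ind_one (μ : Measure ℝ) {s : Set ℝ} (hs : MeasurableSet s) :
    ∫⁻ x, s.indicator (fun _ => (1:ℝ≥0∞)) x ∂μ = μ s := by
  exact lintegral_indicator_one (μ := μ) hs

lemma ind_Ioc (a c b s : ℝ) :
    (Ioc (max a c) b).indicator (fun _ => (1:ℝ≥0∞)) s
      = (Iio s).indicator (fun _ => (1:ℝ≥0∞)) a
        * ((Ioi c).indicator (fun _ => (1:ℝ≥0∞)) s * (Iic b).indicator (fun _ => (1:ℝ≥0∞)) s) := by
  by_cases h1 : a < s <;> by_cases h2 : c < s <;> by_cases h3 : s ≤ b <;>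
    simp [indicator_apply, mem_Ioc, mem_Iio, mem_Ioi, mem_Iic, max_lt_iff, h1, h2, h3]

lemma double_int (c : ℝ) :
    ∫⁻ n, (∫⁻ w, volume (Ioc (max w c) n) ∂stdNormal) ∂stdNormal
      = ∫⁻ s in Ici c, stdNormal (Iic s) * (1 - stdNormal (Iic s)) := by
  have hg : ∀ n : ℝ, Measurable fun s : ℝ =>
      (Ioi c).indicator (fun _ => (1:ℝ≥0∞)) s * (Iic n).indicator (fun _ => (1:ℝ≥0∞)) s :=
    fun n => (measurable_const.indicator measurableSet_Ioi).mul
      (measurable_const.indicator measurableSet_Iic)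
  have hswap1 : ∀ n : ℝ, ∫⁻ w, volume (Ioc (max w c) n) ∂stdNormal
      = ∫⁻ s, stdNormal (Iio s)
          * ((Ioi c).indicator (fun _ => (1:ℝ≥0∞)) s * (Iic n).indicator (fun _ => (1:ℝ≥0∞)) s) := by
    intro n
    have h1 : ∀ w : ℝ, volume (Ioc (max w c) n)
        = ∫⁻ s, (Iio s).indicator (fun _ => (1:ℝ≥0∞)) w
            * ((Ioi c).indicator (fun _ => (1:ℝ≥0∞)) s * (Iic n).indicator (fun _ => (1:ℝ≥0∞)) s) := by
      intro w
      rw [← lintegral_indicator_one measurableSet_Ioc]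
      exact lintegral_congr fun s => by
        have := ind_Ioc w c n s
        exact this
    rw [lintegral_congr h1]
    rw [lintegral_lintegral_swap (μ := stdNormal) (ν := volume)
      (f := fun w s => (Iio s).indicator (fun _ => (1:ℝ≥0∞)) w
        * ((Ioi c).indicator (fun _ => (1:ℝ≥0∞)) s * (Iic n).indicator (fun _ => (1:ℝ≥0∞)) s))
      (Measurable.aemeasurable (by
        exact (meas_ind_lt.mul ((hg n).comp measurable_snd))))]
    refine lintegral_congr fun s => ?_
    rw [lintegral_mul_const' _ _ (by by_cases h1 : c < s <;> by_cases h2 : s ≤ n <;>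
      simp [h1, h2]), lint_ind_one stdNormal measurableSet_Iio]
  rw [lintegral_congr hswap1]
  have hflip : ∀ n s : ℝ, (Iic n).indicator (fun _ => (1:ℝ≥0∞)) s
      = (Ici s).indicator (fun _ => (1:ℝ≥0∞)) n := by
    intro n s; by_cases h : s ≤ n <;> simp [h]
  rw [lintegral_lintegral_swap (μ := stdNormal) (ν := volume)
    (f := fun n s => stdNormal (Iio s)
      * ((Ioi c).indicator (fun _ => (1:ℝ≥0∞)) s * (Iic n).indicator (fun _ => (1:ℝ≥0∞)) s))
    (Measurable.aemeasurable (by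
      exact (measurable_stdIio.comp measurable_snd).mul
        (((measurable_const.indicator measurableSet_Ioi).comp measurable_snd).mul meas_ind_le)))]
  have hinner : ∀ s : ℝ, ∫⁻ n, stdNormal (Iio s)
      * ((Ioi c).indicator (fun _ => (1:ℝ≥0∞)) s * (Iic n).indicator (fun _ => (1:ℝ≥0∞)) s)
      ∂stdNormal
      = (Ioi c).indicator (fun _ => (1:ℝ≥0∞)) s * (stdNormal (Iic s) * (1 - stdNormal (Iic s))) := by
    intro s
    have h2 : ∀ n : ℝ, stdNormal (Iio s)
        * ((Ioi c).indicator (fun _ => (1:ℝ≥0∞)) s * (Iic n).indicator (fun _ => (1:ℝ≥0∞)) s)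
        = (stdNormal (Iio s) * (Ioi c).indicator (fun _ => (1:ℝ≥0∞)) s)
          * (Ici s).indicator (fun _ => (1:ℝ≥0∞)) n := by
      intro n; rw [hflip n s]; ring
    rw [lintegral_congr h2, lintegral_const_mul _ (measurable_const.indicator measurableSet_Ici),
      lint_ind_one stdNormal measurableSet_Ici, std_Ici, std_Iio]
    ring
  rw [lintegral_congr hinner]
  have hfin : ∀ s : ℝ, (Ioi c).indicator (fun _ => (1:ℝ≥0∞)) s
      * (stdNormal (Iic s) * (1 - stdNormal (Iic s)))
      = (Ioi c).indicator (fun s => stdNormal (Iic s) * (1 - stdNormal (Iic s))) s := by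
    intro s; by_cases h : c < s <;> simp [h]
  rw [lintegral_congr hfin, lintegral_indicator measurableSet_Ioi,
    Measure.restrict_congr_set (Ioi_ae_eq_Ici (μ := volume))]

lemma triple_eq (c : ℝ → ℝ) (hc : Measurable c) :
    ∫⁻ p : ℝ × ℝ × ℝ, ENNReal.ofReal (max (p.1 - max p.2.1 (c p.2.2)) 0)
        ∂(stdNormal.prod (stdNormal.prod stdNormal))
      = ∫⁻ v, (∫⁻ s in Ici (c v), stdNormal (Iic s) * (1 - stdNormal (Iic s))) ∂stdNormal := by
  have hmax : ∀ x : ℝ, ENNReal.ofReal (max x 0) = ENNReal.ofReal x := by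
    intro x; rcases le_total x 0 with h | h
    · rw [max_eq_right h, ENNReal.ofReal_zero, ENNReal.ofReal_of_nonpos h]
    · rw [max_eq_left h]
  have hFmeas : Measurable fun p : ℝ × ℝ × ℝ => ENNReal.ofReal (p.1 - max p.2.1 (c p.2.2)) :=
    ENNReal.measurable_ofReal.comp (measurable_fst.sub
      ((measurable_fst.comp measurable_snd).max (hc.comp (measurable_snd.comp measurable_snd))))
  have hF2 : ∀ n : ℝ, Measurable fun q : ℝ × ℝ => ENNReal.ofReal (n - max q.1 (c q.2)) :=
    fun n => ENNReal.measurable_ofReal.comp (measurable_const.sub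
      (measurable_fst.max (hc.comp measurable_snd)))
  calc ∫⁻ p : ℝ × ℝ × ℝ, ENNReal.ofReal (max (p.1 - max p.2.1 (c p.2.2)) 0)
        ∂(stdNormal.prod (stdNormal.prod stdNormal))
      = ∫⁻ p : ℝ × ℝ × ℝ, ENNReal.ofReal (p.1 - max p.2.1 (c p.2.2))
        ∂(stdNormal.prod (stdNormal.prod stdNormal)) := lintegral_congr fun p => hmax _
    _ = ∫⁻ n, (∫⁻ q : ℝ × ℝ, ENNReal.ofReal (n - max q.1 (c q.2)) ∂(stdNormal.prod stdNormal))
        ∂stdNormal := lintegral_prod _ hFmeas.aemeasurable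
    _ = ∫⁻ n, (∫⁻ w, (∫⁻ v, ENNReal.ofReal (n - max w (c v)) ∂stdNormal) ∂stdNormal)
        ∂stdNormal := by
        refine lintegral_congr fun n => ?_
        exact lintegral_prod _ (hF2 n).aemeasurable
    _ = ∫⁻ n, (∫⁻ v, (∫⁻ w, ENNReal.ofReal (n - max w (c v)) ∂stdNormal) ∂stdNormal)
        ∂stdNormal := by
        refine lintegral_congr fun n => ?_
        exact lintegral_lintegral_swap (μ := stdNormal) (ν := stdNormal)
          (f := fun w v => ENNReal.ofReal (n - max w (c v))) (hF2 n).aemeasurable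
    _ = ∫⁻ v, (∫⁻ n, (∫⁻ w, ENNReal.ofReal (n - max w (c v)) ∂stdNormal) ∂stdNormal)
        ∂stdNormal := by
        refine lintegral_lintegral_swap (μ := stdNormal) (ν := stdNormal)
          (f := fun n v => ∫⁻ w, ENNReal.ofReal (n - max w (c v)) ∂stdNormal) ?_
        have hm : Measurable fun r : ℝ × ℝ × ℝ => ENNReal.ofReal (r.2.1 - max r.1 (c r.2.2)) :=
          ENNReal.measurable_ofReal.comp ((measurable_fst.comp measurable_snd).sub
            (measurable_fst.max (hc.comp (measurable_snd.comp measurable_snd))))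
        exact (Measurable.lintegral_prod_left (μ := stdNormal)
          (f := fun w (q : ℝ × ℝ) => ENNReal.ofReal (q.1 - max w (c q.2))) hm).aemeasurable
    _ = ∫⁻ v, (∫⁻ s in Ici (c v), stdNormal (Iic s) * (1 - stdNormal (Iic s))) ∂stdNormal := by
        refine lintegral_congr fun v => ?_
        rw [← double_int (c v)]
        refine lintegral_congr fun n => lintegral_congr fun w => ?_
        rw [Real.volume_Ioc]

lemma measurable_D (c : ℝ → ℝ) (hc : Measurable c) :
    Measurable fun v => ∫⁻ s in Ici (c v), stdNormal (Iic s) * (1 - stdNormal (Iic s)) := by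
  have hW : Measurable fun s => stdNormal (Iic s) * (1 - stdNormal (Iic s)) :=
    measurable_stdIic.mul (measurable_const.sub measurable_stdIic)
  have h : ∀ v, ∫⁻ s in Ici (c v), stdNormal (Iic s) * (1 - stdNormal (Iic s))
      = ∫⁻ s, (Ici (c v)).indicator (fun s => stdNormal (Iic s) * (1 - stdNormal (Iic s))) s :=
    fun v => (lintegral_indicator measurableSet_Ici _).symm
  simp_rw [h]
  apply Measurable.lintegral_prod_left
    (f := fun s v => (Ici (c v)).indicator (fun s => stdNormal (Iic s) * (1 - stdNormal (Iic s))) s)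
  have heq : (fun q : ℝ × ℝ =>
      (Ici (c q.2)).indicator (fun s => stdNormal (Iic s) * (1 - stdNormal (Iic s))) q.1)
      = {p : ℝ × ℝ | c p.2 ≤ p.1}.indicator
          (fun p => stdNormal (Iic p.1) * (1 - stdNormal (Iic p.1))) := by
    ext q; by_cases hq : c q.2 ≤ q.1 <;> simp [hq]
  show Measurable fun q : ℝ × ℝ =>
      (Ici (c q.2)).indicator (fun s => stdNormal (Iic s) * (1 - stdNormal (Iic s))) q.1
  rw [heq]
  exact (hW.comp measurable_fst).indicator (measurableSet_le (hc.comp measurable_snd) measurable_fst)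

end

theorem stmt_6 (μ α σ t : ℝ) (hσ : 0 < σ) :
    ∫ v, etwCRPS (gamma1 t) (μ + α * v) σ ∂stdNormal =
      σ * ∫ p : ℝ × ℝ × ℝ, max (p.1 - max p.2.1 ((t - μ - α * p.2.2) / σ)) 0
        ∂(stdNormal.prod (stdNormal.prod stdNormal)) := by
  have hW : Measurable fun s => stdNormal (Iic s) * (1 - stdNormal (Iic s)) :=
    measurable_stdIic.mul (measurable_const.sub measurable_stdIic)
  set c : ℝ → ℝ := fun v => (t - μ - α * v) / σ with hc
  have hcm : Measurable c := by fun_prop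
  set D : ℝ → ℝ≥0∞ :=
    fun v => ∫⁻ s in Ici (c v), stdNormal (Iic s) * (1 - stdNormal (Iic s)) with hD
  have hDm : Measurable D := measurable_D c hcm
  have hJ : ∀ v : ℝ, (∫⁻ u in Ici t, gaussMeasure (μ + α * v) σ (Iic u)
        * (1 - gaussMeasure (μ + α * v) σ (Iic u)))
      = ENNReal.ofReal σ * D v := by
    intro v
    have h1 : ∀ u ∈ Ici t, gaussMeasure (μ + α * v) σ (Iic u)
        * (1 - gaussMeasure (μ + α * v) σ (Iic u))
        = (fun s => stdNormal (Iic s) * (1 - stdNormal (Iic s))) ((u - (μ + α * v)) / σ) := by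
      intro u _; rw [gaussMeasure_Iic hσ]
    rw [setLIntegral_congr_fun measurableSet_Ici h1,
      setLIntegral_scale hσ (μ + α * v) t _ hW,
      show (t - (μ + α * v)) / σ = c v from by rw [hc]; ring_nf]
  have hLHS : ∫ v, etwCRPS (gamma1 t) (μ + α * v) σ ∂stdNormal
      = (ENNReal.ofReal σ * ∫⁻ v, D v ∂stdNormal).toReal := by
    have h1 : ∀ v : ℝ, etwCRPS (gamma1 t) (μ + α * v) σ = ((ENNReal.ofReal σ * D v)).toReal := by
      intro v; rw [etw_eq hσ t (μ + α * v), hJ v]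
    rw [integral_congr_ae (.of_forall h1),
      integral_toReal ((hDm.const_mul _).aemeasurable)
        (.of_forall fun v => by
          rw [← hJ v]; exact lt_top_iff_ne_top.mpr (J_lt_top hσ (μ + α * v) t)),
      lintegral_const_mul _ hDm]
  have hRmeas : AEStronglyMeasurable
      (fun p : ℝ × ℝ × ℝ => max (p.1 - max p.2.1 ((t - μ - α * p.2.2) / σ)) 0)
      (stdNormal.prod (stdNormal.prod stdNormal)) := by
    apply Continuous.aestronglyMeasurable
    fun_prop
  have hRHS : ∫ p : ℝ × ℝ × ℝ, max (p.1 - max p.2.1 ((t - μ - α * p.2.2) / σ)) 0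
        ∂(stdNormal.prod (stdNormal.prod stdNormal))
      = (∫⁻ v, D v ∂stdNormal).toReal := by
    have heq := integral_eq_lintegral_of_nonneg_ae
      (μ := stdNormal.prod (stdNormal.prod stdNormal))
      (f := fun p : ℝ × ℝ × ℝ => max (p.1 - max p.2.1 ((t - μ - α * p.2.2) / σ)) 0)
      (Filter.Eventually.of_forall fun p => le_max_right _ _) hRmeas
    rw [heq]
    congr 1
    exact triple_eq c hcm
  rw [hLHS, hRHS, ENNReal.toReal_mul, ENNReal.toReal_ofReal hσ.le]
end
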